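/- arXiv:1002.2124 — 3 statements merged into one kernel-verified Lean document; each statement's English description precedes it below -/
import Mathlib

section
/- Let 0 < α < 1 and let ν be a probability measure on [0,∞) whose moments satisfy ∫_0^∞ τ^n dν(τ) = n! / Γ(αn+1) for every n ∈ ℕ. Then for every n ∈ ℕ and every real t ≥ 0 one has E_α^{(n)}(−t) = ∫_0^∞ τ^n e^{−tτ} dν(τ); in particular E_α^{(n)}(−t) is a nonnegative real number, i.e., t ↦ E_α(−t) is completely monotone on [0,∞). -/
open MeasureTheory Complex

/-- The Mittag-Leffler function `E_α(z) = ∑ₙ zⁿ / Γ(αn+1)`. -/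
noncomputable def mittagLeffler (α : ℝ) (z : ℂ) : ℂ :=
  ∑' n : ℕ, z ^ n / (Real.Gamma (α * n + 1) : ℂ)

/-! If `ν` lives on `[0, ∞)` and has moments `n!/Γ(αn+1)`, expanding `e^{zτ}` and integrating
termwise gives `∫ e^{zτ} dν(τ) = ∑ zᵏ/Γ(αk+1) = E_α(z)`. The interchange is legitimate for every
`z ∈ ℂ` because `∑ rᵏ/Γ(αk+1)` converges for all `r`, by the ratio test and the log-convexity bound
`xᵃ Γ(x+1) ≤ Γ(x+1+a)`. So `E_α` is the complex moment generating function of `ν`, finite on all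
of `ℂ`, and its derivatives are obtained by differentiating under the integral sign. -/

open ProbabilityTheory
open scoped Nat

namespace Real

theorem rpow_mul_Gamma_add_one_le {x a : ℝ} (hx : 0 < x) (ha : 0 < a) :
    x ^ a * Gamma (x + 1) ≤ Gamma (x + 1 + a) := by
  have hΓx := Gamma_pos_of_pos hx
  have hΓ₁ := Gamma_pos_of_pos (by positivity : 0 < x + 1)
  have hΓ₂ := Gamma_pos_of_pos (by positivity : 0 < x + 1 + a)
  have slope := convexOn_log_Gamma.slope_mono_adjacent (Set.mem_Ioi.2 hx)
    (Set.mem_Ioi.2 (by positivity : 0 < x + 1 + a)) (lt_add_one x) (lt_add_of_pos_right _ ha)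
  -- by `Γ(x+1) = xΓ(x)` the slope of `log Γ` on `[x, x+1]` is `log x`
  simp only [Function.comp_apply, Gamma_add_one hx.ne', log_mul hx.ne' hΓx.ne',
    add_sub_cancel_left, add_sub_cancel_right, div_one, le_div_iff₀ ha] at slope
  rw [← log_le_log_iff (by positivity) hΓ₂, log_mul (by positivity) (by positivity),
    log_rpow hx, Gamma_add_one hx.ne', log_mul hx.ne' hΓx.ne']
  linarith

theorem summable_pow_div_Gamma_mul_add_one {α : ℝ} (hα : 0 < α) (r : ℝ) :
    Summable fun k : ℕ => r ^ k / Gamma (α * k + 1) := by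
  refine summable_of_ratio_norm_eventually_le (r := 1 / 2) (by norm_num) ?_
  have hgrow : Filter.Tendsto (fun k : ℕ => (α * k) ^ α) Filter.atTop Filter.atTop :=
    (tendsto_rpow_atTop hα).comp (tendsto_natCast_atTop_atTop.const_mul_atTop hα)
  filter_upwards [hgrow.eventually_ge_atTop (2 * |r|), Filter.eventually_gt_atTop 0]
    with k hk hk₀
  have hαk : 0 < α * k := mul_pos hα (Nat.cast_pos.2 hk₀)
  have hΓ := Gamma_pos_of_pos (by positivity : 0 < α * k + 1)
  have hΓ' := Gamma_pos_of_pos (by positivity : 0 < α * k + 1 + α)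
  have hratio := rpow_mul_Gamma_add_one_le hαk hα
  rw [norm_div, norm_div, norm_pow, norm_pow, norm_of_nonneg hΓ.le, Nat.cast_succ,
    show α * (k + 1 : ℝ) + 1 = α * k + 1 + α by ring, norm_of_nonneg hΓ'.le,
    div_le_iff₀ hΓ', norm_eq_abs]
  have hr : |r| * Gamma (α * k + 1) ≤ 1 / 2 * Gamma (α * k + 1 + α) := by nlinarith
  calc |r| ^ (k + 1) = |r| ^ k / Gamma (α * k + 1) * (|r| * Gamma (α * k + 1)) := by
        field_simp; ring
    _ ≤ |r| ^ k / Gamma (α * k + 1) * (1 / 2 * Gamma (α * k + 1 + α)) := by gcongr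
    _ = 1 / 2 * (|r| ^ k / Gamma (α * k + 1)) * Gamma (α * k + 1 + α) := by ring

end Real

namespace ProbabilityTheory

variable {μ : Measure ℝ}

lemma hasSum_complexMGF_id_of_summable (hint : ∀ k : ℕ, Integrable (fun τ : ℝ => τ ^ k) μ)
    (z : ℂ) (hsum : Summable fun k : ℕ => ‖z‖ ^ k / k ! * ∫ τ, |τ| ^ k ∂μ) :
    HasSum (fun k : ℕ => z ^ k / k ! * ((∫ τ, τ ^ k ∂μ : ℝ) : ℂ)) (complexMGF id μ z) := by
  set F : ℕ → ℝ → ℂ := fun k τ => z ^ k / k ! * ((τ ^ k : ℝ) : ℂ)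
  have hF_int (k : ℕ) : Integrable (F k) μ := ((hint k).ofReal (𝕜 := ℂ)).const_mul _
  have hF_norm (k : ℕ) : ∫ τ, ‖F k τ‖ ∂μ = ‖z‖ ^ k / k ! * ∫ τ, |τ| ^ k ∂μ := by
    simp [F, ← integral_const_mul]
  have hF_integral (k : ℕ) : ∫ τ, F k τ ∂μ = z ^ k / k ! * ((∫ τ, τ ^ k ∂μ : ℝ) : ℂ) := by
    simp only [F, integral_const_mul, integral_complex_ofReal]
  have hF_sum (τ : ℝ) : ∑' k, F k τ = cexp (z * τ) := by
    rw [Complex.exp_eq_exp_ℂ, ← (NormedSpace.expSeries_div_hasSum_exp _).tsum_eq]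
    congr 1 with k
    simp only [F]
    push_cast
    ring
  have := hasSum_integral_of_summable_integral_norm hF_int (by simpa only [hF_norm] using hsum)
  simpa only [hF_integral, hF_sum, complexMGF, id] using this

lemma integrable_exp_mul_of_summable (hint : ∀ k : ℕ, Integrable (fun τ : ℝ => τ ^ k) μ)
    (s : ℝ) (hsum : Summable fun k : ℕ => |s| ^ k / k ! * ∫ τ, |τ| ^ k ∂μ) :
    Integrable (fun τ => Real.exp (s * τ)) μ := by
  set G : ℕ → ℝ → ℝ := fun k τ => |s| ^ k / k ! * |τ| ^ k
  have hG_nonneg (k : ℕ) (τ : ℝ) : 0 ≤ G k τ := by positivity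
  have hG_int (k : ℕ) : Integrable (G k) μ := by
    simpa [G, abs_pow] using (hint k).norm.const_mul (|s| ^ k / k !)
  have hG_sum (τ : ℝ) : HasSum (fun k => G k τ) (Real.exp |s * τ|) := by
    have h := NormedSpace.expSeries_div_hasSum_exp |s * τ|
    rw [← Real.exp_eq_exp_ℝ] at h
    simpa only [abs_mul, mul_pow, mul_div_right_comm] using h
  have hdom : Integrable (fun τ => Real.exp |s * τ|) μ := by
    refine ⟨by fun_prop, ?_⟩
    rw [hasFiniteIntegral_iff_ofReal (ae_of_all _ fun τ => (Real.exp_pos _).le)]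
    calc ∫⁻ τ, ENNReal.ofReal (Real.exp |s * τ|) ∂μ
        = ∫⁻ τ, ∑' k, ENNReal.ofReal (G k τ) ∂μ := by
          congr 1 with τ
          rw [← (hG_sum τ).tsum_eq,
            ENNReal.ofReal_tsum_of_nonneg (hG_nonneg · τ) (hG_sum τ).summable]
      _ = ∑' k, ENNReal.ofReal (∫ τ, G k τ ∂μ) := by
          rw [lintegral_tsum fun k => (hG_int k).aemeasurable.ennreal_ofReal]
          congr 1 with k
          rw [ofReal_integral_eq_lintegral_ofReal (hG_int k) (ae_of_all _ (hG_nonneg k))]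
      _ = ENNReal.ofReal (∑' k, ∫ τ, G k τ ∂μ) := by
          rw [ENNReal.ofReal_tsum_of_nonneg (fun k => integral_nonneg (hG_nonneg k))]
          simpa only [G, integral_const_mul] using hsum
      _ < ⊤ := ENNReal.ofReal_lt_top
  refine hdom.mono' (by fun_prop) (ae_of_all _ fun τ => ?_)
  rw [Real.norm_of_nonneg (Real.exp_pos _).le]
  exact Real.exp_le_exp.2 (le_abs_self _)

end ProbabilityTheory

lemma ae_le_of_measure_Iio_eq_zero {X : Type*} [MeasurableSpace X] [LinearOrder X]
    {μ : Measure X} {a : X} (h : μ (Set.Iio a) = 0) :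
    ∀ᵐ x ∂μ, a ≤ x := by
  rw [ae_iff]
  simp only [not_le]
  exact h

section MittagLeffler

variable {α : ℝ} {ν : Measure ℝ}

lemma summable_pow_div_factorial_mul_integral_abs_pow (hα : 0 < α) (hsupp : ν (Set.Iio 0) = 0)
    (hmom : ∀ n : ℕ, ∫ τ, τ ^ n ∂ν = (Nat.factorial n : ℝ) / Real.Gamma (α * n + 1)) (r : ℝ) :
    Summable fun k : ℕ => r ^ k / k ! * ∫ τ, |τ| ^ k ∂ν := by
  refine (Real.summable_pow_div_Gamma_mul_add_one hα r).congr fun k => ?_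
  have habs : ∫ τ, |τ| ^ k ∂ν = ∫ τ, τ ^ k ∂ν := integral_congr_ae <|
    (ae_le_of_measure_Iio_eq_zero hsupp).mono fun τ hτ => by simp only [abs_of_nonneg hτ]
  rw [habs, hmom k]
  field_simp

theorem mittagLeffler_eq_complexMGF (hα : 0 < α) (hsupp : ν (Set.Iio 0) = 0)
    (hint : ∀ n : ℕ, Integrable (fun τ : ℝ => τ ^ n) ν)
    (hmom : ∀ n : ℕ, ∫ τ, τ ^ n ∂ν = (Nat.factorial n : ℝ) / Real.Gamma (α * n + 1)) :
    mittagLeffler α = complexMGF id ν := by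
  funext z
  have h := hasSum_complexMGF_id_of_summable hint z
    (summable_pow_div_factorial_mul_integral_abs_pow hα hsupp hmom ‖z‖)
  rw [mittagLeffler, ← h.tsum_eq]
  congr 1 with k
  have hΓ : (Real.Gamma (α * k + 1) : ℂ) ≠ 0 :=
    ofReal_ne_zero.2 (Real.Gamma_pos_of_pos (by positivity)).ne'
  have hk : (k ! : ℂ) ≠ 0 := Nat.cast_ne_zero.2 k.factorial_ne_zero
  rw [hmom k]
  push_cast
  field_simp

theorem integrableExpSet_eq_univ_of_mittagLeffler_moments (hα : 0 < α) (hsupp : ν (Set.Iio 0) = 0)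
    (hint : ∀ n : ℕ, Integrable (fun τ : ℝ => τ ^ n) ν)
    (hmom : ∀ n : ℕ, ∫ τ, τ ^ n ∂ν = (Nat.factorial n : ℝ) / Real.Gamma (α * n + 1)) :
    integrableExpSet id ν = Set.univ :=
  Set.eq_univ_of_forall fun s => integrable_exp_mul_of_summable hint s
    (summable_pow_div_factorial_mul_integral_abs_pow hα hsupp hmom |s|)

end MittagLeffler

theorem mittagLeffler_completely_monotone_general
    (α : ℝ) (hα₁ : 0 < α)
    (ν : Measure ℝ) (hsupp : ν (Set.Iio 0) = 0)
    (hmom_int : ∀ n : ℕ, Integrable (fun τ : ℝ => τ ^ n) ν)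
    (hmom : ∀ n : ℕ, ∫ τ, τ ^ n ∂ν = (Nat.factorial n : ℝ) / Real.Gamma (α * n + 1))
    (n : ℕ) (t : ℝ) :
    iteratedDeriv n (mittagLeffler α) (-(t : ℂ)) =
        ((∫ τ, τ ^ n * Real.exp (-t * τ) ∂ν : ℝ) : ℂ) ∧
      0 ≤ ∫ τ, τ ^ n * Real.exp (-t * τ) ∂ν := by
  have hexp := integrableExpSet_eq_univ_of_mittagLeffler_moments hα₁ hsupp hmom_int hmom
  refine ⟨?_, integral_nonneg_of_ae ((ae_le_of_measure_Iio_eq_zero hsupp).mono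
    fun τ hτ => by positivity)⟩
  rw [mittagLeffler_eq_complexMGF hα₁ hsupp hmom_int hmom,
    iteratedDeriv_complexMGF (by simp [hexp]), ← integral_complex_ofReal]
  push_cast
  rfl

/-- Let `0 < α < 1` and let `ν` be a probability measure on `[0,∞)` (a probability measure
on `ℝ` giving no mass to `(-∞,0)`) whose moments satisfy `∫ τⁿ dν(τ) = n!/Γ(αn+1)` for all
`n`. Then for every `n` and every real `t ≥ 0`,
`E_α⁽ⁿ⁾(−t) = ∫ τⁿ e^{−tτ} dν(τ)`; in particular this is a nonnegative real number,
i.e. `t ↦ E_α(−t)` is completely monotone on `[0,∞)`. -/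
theorem mittagLeffler_completely_monotone
    (α : ℝ) (hα₁ : 0 < α) (hα₂ : α < 1)
    (ν : Measure ℝ) [IsProbabilityMeasure ν] (hsupp : ν (Set.Iio 0) = 0)
    (hmom_int : ∀ n : ℕ, Integrable (fun τ : ℝ => τ ^ n) ν)
    (hmom : ∀ n : ℕ, ∫ τ, τ ^ n ∂ν = (Nat.factorial n : ℝ) / Real.Gamma (α * n + 1))
    (n : ℕ) (t : ℝ) (ht : 0 ≤ t) :
    iteratedDeriv n (mittagLeffler α) (-(t : ℂ)) =
        ((∫ τ, τ ^ n * Real.exp (-t * τ) ∂ν : ℝ) : ℂ) ∧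
      0 ≤ ∫ τ, τ ^ n * Real.exp (-t * τ) ∂ν :=
  mittagLeffler_completely_monotone_general α hα₁ ν hsupp hmom_int hmom n t
end

section
/- Let 0 < α < 1, let ν be a probability measure on [0,∞) whose moments satisfy ∫_0^∞ τ^n dν(τ) = n! / Γ(αn+1) for every n ∈ ℕ, and let t ≥ 0 be real. Define p_n := (t^n / n!) · E_α^{(n)}(−t) for n ∈ ℕ. Then p_n ≥ 0 for every n and ∑_{n=0}^∞ p_n = 1; that is, (p_n) is a probability distribution on ℕ (the fractional Poisson distribution with parameter t = σ^α). -/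
open MeasureTheory Complex
open scoped ComplexOrder

/-! The moment condition makes `E_α` the moment generating function of `ν`:
`E_α(z) = ∫ e^{τz} dν(τ)`, the interchange of sum and integral being justified by the
growth bound `Γ(s+1) ≥ y^s / (y e^y)`. Writing `e^{τ(s+w)} = e^{τs} ∑ (τw)^n/n!` then shows
that the Taylor coefficients of `E_α` at a point `s ≤ 0` are the integrals
`E_α^{(n)}(s) = ∫ τ^n e^{τs} dν(τ) ≥ 0`, and evaluating the Taylor series at `-t` in `w = t`
gives `∑ₙ pₙ = E_α(0) = 1`. -/

open scoped Nat
open Filter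

lemma factorial_floor_le_Gamma_add_one {s : ℝ} (hs : 1 ≤ s) :
    (⌊s⌋₊ ! : ℝ) ≤ Real.Gamma (s + 1) := by
  have hfloor : (1 : ℝ) ≤ ⌊s⌋₊ := by exact_mod_cast Nat.le_floor (by exact_mod_cast hs)
  rw [← Real.Gamma_nat_eq_factorial]
  exact Real.Gamma_strictMonoOn_Ici.monotoneOn (by simp; linarith) (by simp; linarith)
    (by linarith [Nat.floor_le (zero_le_one.trans hs)])

lemma rpow_le_mul_exp_mul_Gamma_add_one {y s : ℝ} (hy : 1 ≤ y) (hs : 1 ≤ s) :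
    y ^ s ≤ y * Real.exp y * Real.Gamma (s + 1) := by
  calc y ^ s ≤ y ^ ((⌊s⌋₊ + 1 : ℕ) : ℝ) :=
        Real.rpow_le_rpow_of_exponent_le hy (by push_cast; exact (Nat.lt_floor_add_one s).le)
    _ = y * (y ^ ⌊s⌋₊ / ⌊s⌋₊ ! * ⌊s⌋₊ !) := by
        rw [Real.rpow_natCast, div_mul_cancel₀ _ (by positivity), _root_.pow_succ']
    _ ≤ y * (Real.exp y * Real.Gamma (s + 1)) := by
        gcongr
        · exact Real.pow_div_factorial_le_exp _ (zero_le_one.trans hy) _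
        · exact factorial_floor_le_Gamma_add_one hs
    _ = y * Real.exp y * Real.Gamma (s + 1) := by ring

lemma summable_pow_div_Gamma_mul_add_one {α : ℝ} (hα : 0 < α) {x : ℝ} (hx : 0 ≤ x) :
    Summable fun n : ℕ => x ^ n / Real.Gamma (α * n + 1) := by
  -- `y` is chosen so that `y ^ α = x + 1`: the terms are then dominated by `(x / (x + 1)) ^ n`
  set y := (x + 1) ^ α⁻¹
  have hy : 1 ≤ y := Real.one_le_rpow (by linarith) (inv_nonneg.2 hα.le)
  have hyα : y ^ α = x + 1 := by
    rw [← Real.rpow_mul (by linarith), inv_mul_cancel₀ hα.ne', Real.rpow_one]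
  have hratio : x / (x + 1) < 1 := (div_lt_one (by linarith)).2 (lt_add_one x)
  refine Summable.of_norm_bounded_eventually_nat
    ((summable_geometric_of_lt_one (by positivity) hratio).mul_left (y * Real.exp y)) ?_
  filter_upwards [eventually_ge_atTop ⌈α⁻¹⌉₊] with n hn
  have hαn : 1 ≤ α * n := by
    rw [← mul_inv_cancel₀ hα.ne']
    exact mul_le_mul_of_nonneg_left ((Nat.le_ceil _).trans (by exact_mod_cast hn)) hα.le
  have hbound := rpow_le_mul_exp_mul_Gamma_add_one hy hαn
  rw [Real.rpow_mul (by positivity), hyα, Real.rpow_natCast] at hbound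
  rw [Real.norm_of_nonneg (by positivity), div_pow, ← mul_div_assoc,
    div_le_div_iff₀ (by positivity) (by positivity)]
  calc x ^ n * (x + 1) ^ n ≤ x ^ n * (y * Real.exp y * Real.Gamma (α * n + 1)) := by gcongr
    _ = _ := by ring

lemma iteratedDeriv_eq_of_forall_hasSum {f : ℂ → ℂ} {z₀ : ℂ} {a : ℕ → ℂ}
    (hf : ∀ w, HasSum (fun n => a n * (w ^ n / n !)) (f (z₀ + w))) (n : ℕ) :
    iteratedDeriv n f z₀ = a n := by
  set p := FormalMultilinearSeries.ofScalars ℂ fun k => a k / (k ! : ℂ)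
  have hp : ∀ k w, p k (fun _ => w) = a k * (w ^ k / k !) := fun k w => by
    rw [FormalMultilinearSeries.ofScalars_apply_eq, smul_eq_mul]; ring
  have hradius : p.radius = ⊤ := by
    refine ENNReal.eq_top_of_forall_nnreal_le fun r => p.le_radius_of_tendsto (l := 0) ?_
    simpa [p, FormalMultilinearSeries.ofScalars_norm, div_mul_eq_mul_div, mul_div_assoc]
      using ((hf r).summable.tendsto_atTop_zero).norm
  have hps : HasFPowerSeriesOnBall f p z₀ ⊤ :=
    { r_le := hradius.ge
      r_pos := ENNReal.zero_lt_top
      hasSum := fun {w} _ => by simpa only [hp] using hf w }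
  rw [iteratedDeriv_eq_iteratedFDeriv, ← hps.factorial_smul 1 n, hp, one_pow, nsmul_eq_mul]
  field_simp

lemma hasSum_integral_cexp_mul_add {ν : Measure ℝ} {s : ℝ} {w : ℂ}
    (hint : ∀ n : ℕ, Integrable (fun τ => τ ^ n * Real.exp (τ * s)) ν)
    (hsum : Summable fun n : ℕ => (∫ τ, |τ ^ n * Real.exp (τ * s)| ∂ν) * (‖w‖ ^ n / n !)) :
    HasSum (fun n : ℕ => ((∫ τ, τ ^ n * Real.exp (τ * s) ∂ν : ℝ) : ℂ) * (w ^ n / n !))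
      (∫ τ, cexp (τ * (s + w)) ∂ν) := by
  have hexp (τ : ℝ) : HasSum (fun n : ℕ => ((τ ^ n * Real.exp (τ * s) : ℝ) : ℂ) * (w ^ n / n !))
      (cexp (τ * (s + w))) := by
    have h := (NormedSpace.expSeries_div_hasSum_exp (τ * w : ℂ)).mul_left (cexp (τ * s))
    rw [← Complex.exp_eq_exp_ℂ, ← Complex.exp_add, ← mul_add] at h
    refine h.congr_fun fun n => ?_
    push_cast
    ring
  simp_rw [← fun τ => (hexp τ).tsum_eq]
  refine (hasSum_integral_of_summable_integral_norm (fun n => (hint n).ofReal.mul_const _)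
    (hsum.congr fun n => ?_)).congr_fun fun n => ?_
  · rw [← integral_mul_const]
    simp only [norm_mul, norm_div, norm_pow, Complex.norm_real, Complex.norm_natCast,
      Real.norm_eq_abs, abs_mul, abs_pow]
  · rw [integral_mul_const, integral_complex_ofReal]

section

variable {ν : Measure ℝ} {s : ℝ}

lemma integrable_pow_mul_exp_mul (hpos : ∀ᵐ τ ∂ν, 0 ≤ τ) (hs : s ≤ 0) {n : ℕ}
    (hint : Integrable (fun τ => τ ^ n) ν) : Integrable (fun τ => τ ^ n * Real.exp (τ * s)) ν :=
  hint.mul_bdd (c := 1) (by fun_prop) <| hpos.mono fun τ hτ => by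
    rw [Real.norm_of_nonneg (Real.exp_nonneg _), Real.exp_le_one_iff]
    exact mul_nonpos_of_nonneg_of_nonpos hτ hs

lemma integral_pow_mul_exp_mul_nonneg (hpos : ∀ᵐ τ ∂ν, 0 ≤ τ) (n : ℕ) :
    0 ≤ ∫ τ, τ ^ n * Real.exp (τ * s) ∂ν :=
  integral_nonneg_of_ae <| hpos.mono fun τ hτ => by positivity

lemma integral_abs_pow_mul_exp_mul (hpos : ∀ᵐ τ ∂ν, 0 ≤ τ) (n : ℕ) :
    ∫ τ, |τ ^ n * Real.exp (τ * s)| ∂ν = ∫ τ, τ ^ n * Real.exp (τ * s) ∂ν :=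
  integral_congr_ae <| hpos.mono fun τ hτ => abs_of_nonneg (by positivity)

lemma integral_pow_mul_exp_mul_le (hpos : ∀ᵐ τ ∂ν, 0 ≤ τ) (hs : s ≤ 0) {n : ℕ}
    (hint : Integrable (fun τ => τ ^ n) ν) :
    ∫ τ, τ ^ n * Real.exp (τ * s) ∂ν ≤ ∫ τ, τ ^ n ∂ν :=
  integral_mono_ae (integrable_pow_mul_exp_mul hpos hs hint) hint <| hpos.mono fun _ hτ =>
    mul_le_of_le_one_right (pow_nonneg hτ n)
      (Real.exp_le_one_iff.2 (mul_nonpos_of_nonneg_of_nonpos hτ hs))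

end

lemma mittagLeffler_zero (α : ℝ) : mittagLeffler α 0 = 1 := by
  rw [mittagLeffler, tsum_eq_single 0 fun n hn => by rw [zero_pow hn, zero_div]]
  simp

def HasMittagLefflerMoments (α : ℝ) (ν : Measure ℝ) : Prop :=
  ∀ n : ℕ, ∫ τ, τ ^ n ∂ν = (n ! : ℝ) / Real.Gamma (α * n + 1)

section

variable {α : ℝ} {ν : Measure ℝ}

lemma HasMittagLefflerMoments.integrable_pow (hmom : HasMittagLefflerMoments α ν) (hα : 0 ≤ α)
    (n : ℕ) : Integrable (fun τ => τ ^ n) ν :=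
  Integrable.of_integral_ne_zero (by rw [hmom n]; positivity)

lemma summable_integral_abs_pow_mul_exp_mul (hα : 0 < α) (hpos : ∀ᵐ τ ∂ν, 0 ≤ τ)
    (hmom : HasMittagLefflerMoments α ν) {s : ℝ} (hs : s ≤ 0) {x : ℝ} (hx : 0 ≤ x) :
    Summable fun n : ℕ => (∫ τ, |τ ^ n * Real.exp (τ * s)| ∂ν) * (x ^ n / n !) := by
  refine (summable_pow_div_Gamma_mul_add_one hα hx).of_nonneg_of_le
    (fun n => by positivity) fun n => ?_
  have hle := integral_pow_mul_exp_mul_le hpos hs (hmom.integrable_pow hα.le n)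
  rw [hmom n] at hle
  calc (∫ τ, |τ ^ n * Real.exp (τ * s)| ∂ν) * (x ^ n / n !)
      ≤ (n ! : ℝ) / Real.Gamma (α * n + 1) * (x ^ n / n !) := by
        rw [integral_abs_pow_mul_exp_mul hpos]
        gcongr
    _ = x ^ n / Real.Gamma (α * n + 1) := by field_simp

lemma mittagLeffler_eq_integral_cexp (hα : 0 < α) (hpos : ∀ᵐ τ ∂ν, 0 ≤ τ)
    (hmom : HasMittagLefflerMoments α ν) (z : ℂ) :
    mittagLeffler α z = ∫ τ, cexp (τ * z) ∂ν := by
  have h := hasSum_integral_cexp_mul_add (s := 0) (w := z)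
    (fun n => integrable_pow_mul_exp_mul hpos le_rfl (hmom.integrable_pow hα.le n))
    (summable_integral_abs_pow_mul_exp_mul hα hpos hmom le_rfl (norm_nonneg z))
  simp only [mul_zero, Real.exp_zero, mul_one, ofReal_zero, zero_add] at h
  rw [mittagLeffler, ← h.tsum_eq]
  refine tsum_congr fun n => ?_
  rw [hmom n]
  push_cast
  field_simp

lemma hasSum_mittagLeffler_add (hα : 0 < α) (hpos : ∀ᵐ τ ∂ν, 0 ≤ τ)
    (hmom : HasMittagLefflerMoments α ν) {s : ℝ} (hs : s ≤ 0) (w : ℂ) :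
    HasSum (fun n : ℕ => ((∫ τ, τ ^ n * Real.exp (τ * s) ∂ν : ℝ) : ℂ) * (w ^ n / n !))
      (mittagLeffler α (s + w)) := by
  rw [mittagLeffler_eq_integral_cexp hα hpos hmom]
  exact hasSum_integral_cexp_mul_add
    (fun n => integrable_pow_mul_exp_mul hpos hs (hmom.integrable_pow hα.le n))
    (summable_integral_abs_pow_mul_exp_mul hα hpos hmom hs (norm_nonneg w))

lemma iteratedDeriv_mittagLeffler (hα : 0 < α) (hpos : ∀ᵐ τ ∂ν, 0 ≤ τ)
    (hmom : HasMittagLefflerMoments α ν) {s : ℝ} (hs : s ≤ 0) (n : ℕ) :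
    iteratedDeriv n (mittagLeffler α) s = ∫ τ, τ ^ n * Real.exp (τ * s) ∂ν :=
  iteratedDeriv_eq_of_forall_hasSum (hasSum_mittagLeffler_add hα hpos hmom hs) n

end

theorem fractional_poisson_distribution_general
    (α : ℝ) (hα₁ : 0 < α)
    (ν : Measure ℝ) (hsupp : ν (Set.Iio 0) = 0)
    (hmom : ∀ n : ℕ, ∫ τ, τ ^ n ∂ν = (Nat.factorial n : ℝ) / Real.Gamma (α * n + 1))
    (t : ℝ) (ht : 0 ≤ t) :
    (∀ n : ℕ, 0 ≤ (t : ℂ) ^ n / (Nat.factorial n : ℂ) *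
        iteratedDeriv n (mittagLeffler α) (-(t : ℂ))) ∧
      HasSum
        (fun n : ℕ => (t : ℂ) ^ n / (Nat.factorial n : ℂ) *
          iteratedDeriv n (mittagLeffler α) (-(t : ℂ)))
        1 := by
  have hpos : ∀ᵐ τ ∂ν, 0 ≤ τ := ae_iff.2 (by simp only [not_le]; exact hsupp)
  have hs : -t ≤ 0 := neg_nonpos.2 ht
  have hderiv (n : ℕ) : iteratedDeriv n (mittagLeffler α) (-(t : ℂ)) =
      ∫ τ, τ ^ n * Real.exp (τ * -t) ∂ν := by
    rw [← ofReal_neg, iteratedDeriv_mittagLeffler hα₁ hpos hmom hs]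
  refine ⟨fun n => ?_, ?_⟩
  · rw [hderiv]
    exact_mod_cast mul_nonneg (by positivity) (integral_pow_mul_exp_mul_nonneg hpos n)
  · have h := hasSum_mittagLeffler_add hα₁ hpos hmom hs t
    rw [ofReal_neg, neg_add_cancel, mittagLeffler_zero] at h
    refine h.congr_fun fun n => ?_
    rw [hderiv]
    ring

/-- Let `0 < α < 1`, let `ν` be a probability measure on `[0,∞)` with moments
`∫ τⁿ dν = n!/Γ(αn+1)`, and let `t ≥ 0`. Define `pₙ := (tⁿ/n!)·E_α⁽ⁿ⁾(−t)`. Then every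
`pₙ` is a nonnegative real number and `∑ₙ pₙ = 1`: `(pₙ)` is a probability distribution
on `ℕ` (the fractional Poisson distribution). -/
theorem fractional_poisson_distribution
    (α : ℝ) (hα₁ : 0 < α) (hα₂ : α < 1)
    (ν : Measure ℝ) [IsProbabilityMeasure ν] (hsupp : ν (Set.Iio 0) = 0)
    (hmom_int : ∀ n : ℕ, Integrable (fun τ : ℝ => τ ^ n) ν)
    (hmom : ∀ n : ℕ, ∫ τ, τ ^ n ∂ν = (Nat.factorial n : ℝ) / Real.Gamma (α * n + 1))
    (t : ℝ) (ht : 0 ≤ t) :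
    (∀ n : ℕ, 0 ≤ (t : ℂ) ^ n / (Nat.factorial n : ℂ) *
        iteratedDeriv n (mittagLeffler α) (-(t : ℂ))) ∧
      HasSum
        (fun n : ℕ => (t : ℂ) ^ n / (Nat.factorial n : ℂ) *
          iteratedDeriv n (mittagLeffler α) (-(t : ℂ)))
        1 :=
  fractional_poisson_distribution_general α hα₁ ν hsupp hmom t ht
end

section
/- Let (M, 𝓑) be a measurable space with a finite measure μ, let α > 0, and let φ : M → ℝ be bounded measurable. Then ∑_{n=0}^∞ (E_α^{(n)}(−μ(M)) / n!) · ∫_{M^n} e^{i(φ(x_1) + ⋯ + φ(x_n))} dμ^{⊗n}(x_1, …, x_n) = E_α( ∫_M (e^{iφ(x)} − 1) dμ(x) ); that is, the characteristic functional of the fractional Poisson measure ∑_n (E_α^{(n)}(−μ(M))/n!) μ^{(n)} on finite configurations equals E_α(∫(e^{iφ}−1)dμ). -/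
/-!
The `n`-fold integral factorises as `aⁿ` with `a = ∫ e^{iφ} dμ`, so the series is the
Taylor expansion of `E_α` around `-μ(M)` evaluated at `a - μ(M) = ∫ (e^{iφ} - 1) dμ`. It
converges to `E_α(a - μ(M))` because `E_α` is entire, `Γ(αn+1)` growing faster than any
geometric sequence.
-/

open MeasureTheory Complex
open scoped ENNReal

open Filter Topology FormalMultilinearSeries

lemma Real.factorial_floor_le_Gamma_add_one {x : ℝ} (hx : 1 ≤ x) :
    (⌊x⌋₊.factorial : ℝ) ≤ Real.Gamma (x + 1) := by
  have hfloor : (1 : ℝ) ≤ ⌊x⌋₊ := Nat.one_le_cast.mpr (Nat.floor_pos.mpr hx)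
  rw [← Real.Gamma_nat_eq_factorial]
  exact Real.Gamma_strictMonoOn_Ici.monotoneOn (Set.mem_Ici.mpr (by linarith))
    (Set.mem_Ici.mpr (by linarith))
    (by linarith [Nat.floor_le (zero_le_one.trans hx)])

/-- With `c = max B 1 ^ α⁻¹`, `Bⁿ ≤ c ^ (⌊αn⌋ + 1)` while `Γ(αn+1) ≥ ⌊αn⌋!`. -/
lemma tendsto_pow_div_Gamma_mul_add_one {α : ℝ} (hα : 0 < α) {B : ℝ} (hB : 0 ≤ B) :
    Tendsto (fun n : ℕ => B ^ n / Real.Gamma (α * n + 1)) atTop (𝓝 0) := by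
  set c : ℝ := max B 1 ^ α⁻¹
  have hc : 1 ≤ c := Real.one_le_rpow (le_max_right _ _) (inv_nonneg.mpr hα.le)
  have hfloor : Tendsto (fun n : ℕ => ⌊α * n⌋₊) atTop atTop :=
    tendsto_nat_floor_atTop.comp (tendsto_natCast_atTop_atTop.const_mul_atTop hα)
  have hlim := ((FloorSemiring.tendsto_pow_div_factorial_atTop c).comp hfloor).const_mul c
  rw [mul_zero] at hlim
  refine squeeze_zero' (Eventually.of_forall fun n => by positivity) ?_ hlim
  filter_upwards [(tendsto_natCast_atTop_atTop.const_mul_atTop hα).eventually_ge_atTop 1]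
    with n hn
  have hpow : B ^ n ≤ c * c ^ ⌊α * n⌋₊ := calc
    B ^ n ≤ max B 1 ^ n := pow_le_pow_left₀ hB (le_max_left _ _) n
    _ = c ^ (α * n) := by
      rw [← Real.rpow_mul (by positivity), inv_mul_cancel_left₀ hα.ne', Real.rpow_natCast]
    _ ≤ c ^ ((⌊α * n⌋₊ + 1 : ℕ) : ℝ) :=
      Real.rpow_le_rpow_of_exponent_le hc (by push_cast; exact (Nat.lt_floor_add_one _).le)
    _ = c * c ^ ⌊α * n⌋₊ := by rw [Real.rpow_natCast, pow_succ']
  calc B ^ n / Real.Gamma (α * n + 1) ≤ c * c ^ ⌊α * n⌋₊ / (⌊α * n⌋₊).factorial :=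
        div_le_div₀ (by positivity) hpow (by positivity)
          (Real.factorial_floor_le_Gamma_add_one hn)
    _ = c * (c ^ ⌊α * n⌋₊ / (⌊α * n⌋₊).factorial) := mul_div_assoc _ _ _

noncomputable def mittagLefflerSeries (α : ℝ) : FormalMultilinearSeries ℂ ℂ ℂ :=
  ofScalars ℂ fun n => ((Real.Gamma (α * n + 1) : ℂ))⁻¹

lemma mittagLeffler_eq_sum (α : ℝ) :
    mittagLeffler α = (mittagLefflerSeries α).sum := by
  funext z
  exact tsum_congr fun n => by
    rw [mittagLefflerSeries, ofScalars_apply_eq, smul_eq_mul, div_eq_inv_mul]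

lemma radius_mittagLefflerSeries {α : ℝ} (hα : 0 < α) :
    (mittagLefflerSeries α).radius = ∞ :=
  ENNReal.eq_top_of_forall_nnreal_le fun r =>
    (mittagLefflerSeries α).le_radius_of_tendsto (l := 0) <| by
      refine (tendsto_pow_div_Gamma_mul_add_one hα r.coe_nonneg).congr fun n => ?_
      rw [mittagLefflerSeries, ofScalars_norm, norm_inv, Complex.norm_real, Real.norm_eq_abs,
        abs_of_pos (Real.Gamma_pos_of_pos (by positivity)), div_eq_inv_mul]

lemma differentiable_mittagLeffler {α : ℝ} (hα : 0 < α) :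
    Differentiable ℂ (mittagLeffler α) := by
  have hball := (mittagLefflerSeries α).hasFPowerSeriesOnBall
    (by rw [radius_mittagLefflerSeries hα]; exact ENNReal.zero_lt_top)
  rw [radius_mittagLefflerSeries hα, ← mittagLeffler_eq_sum] at hball
  simpa [Metric.eball_top, differentiableOn_univ] using hball.differentiableOn

lemma integral_exp_mul_sum_pi {M ι : Type*} [MeasurableSpace M] [Fintype ι] (μ : Measure M)
    [SigmaFinite μ] (c : ℂ) (f : M → ℂ) :
    ∫ x : ι → M, exp (c * ∑ k, f (x k)) ∂(Measure.pi fun _ => μ) =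
      (∫ x, exp (c * f x) ∂μ) ^ Fintype.card ι := by
  simp_rw [Finset.mul_sum, Complex.exp_sum]
  exact integral_fintype_prod_eq_pow (fun y => exp (c * f y))

lemma integral_exp_I_mul_sub_one {M : Type*} [MeasurableSpace M] (μ : Measure M)
    [IsFiniteMeasure μ] {φ : M → ℝ} (hφ : Measurable φ) :
    ∫ x, (exp (I * φ x) - 1) ∂μ = ∫ x, exp (I * φ x) ∂μ - ((μ Set.univ).toReal : ℂ) := by
  have hint : Integrable (fun x => exp (I * φ x)) μ := by
    refine (integrable_const (1 : ℝ)).mono' (by fun_prop) (Eventually.of_forall fun x => ?_)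
    rw [mul_comm, norm_exp_ofReal_mul_I]
  rw [integral_sub hint (integrable_const 1), integral_const, real_smul, mul_one,
    measureReal_def]

theorem fractional_poisson_characteristic_functional_general
    {M : Type*} [MeasurableSpace M] (μ : Measure M) [IsFiniteMeasure μ]
    (α : ℝ) (hα : 0 < α)
    (φ : M → ℝ) (hφm : Measurable φ) :
    HasSum
      (fun n : ℕ =>
        iteratedDeriv n (mittagLeffler α) (-((μ Set.univ).toReal : ℂ)) /
            (Nat.factorial n : ℂ) *
          ∫ x : Fin n → M, Complex.exp (Complex.I * ∑ k, (φ (x k) : ℂ))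
            ∂(Measure.pi fun _ : Fin n => μ))
      (mittagLeffler α (∫ x, (Complex.exp (Complex.I * (φ x : ℂ)) - 1) ∂μ)) := by
  set m : ℂ := ((μ Set.univ).toReal : ℂ)
  set a : ℂ := ∫ x, exp (I * φ x) ∂μ
  have taylor := hasSum_taylorSeries_of_entire (differentiable_mittagLeffler hα) (-m) (a - m)
  rw [sub_neg_eq_add, sub_add_cancel] at taylor
  rw [integral_exp_I_mul_sub_one μ hφm]
  refine taylor.congr_fun fun n => ?_
  rw [integral_exp_mul_sum_pi μ I (fun y => (φ y : ℂ)), Fintype.card_fin, smul_eq_mul,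
    smul_eq_mul]
  ring

/-- For a finite measure `μ` and a bounded measurable `φ : M → ℝ`, the characteristic
functional of the fractional Poisson measure `∑ₙ (E_α⁽ⁿ⁾(−μ(M))/n!) μ⁽ⁿ⁾` equals
`E_α(∫ (e^{iφ} − 1) dμ)`:
`∑ₙ (E_α⁽ⁿ⁾(−μ(M))/n!) ∫ e^{i(φ(x₁)+⋯+φ(xₙ))} dμ^{⊗n} = E_α(∫ (e^{iφ(x)} − 1) dμ(x))`. -/
theorem fractional_poisson_characteristic_functional
    {M : Type*} [MeasurableSpace M] (μ : Measure M) [IsFiniteMeasure μ]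
    (α : ℝ) (hα : 0 < α)
    (φ : M → ℝ) (hφm : Measurable φ) (hφb : ∃ C : ℝ, ∀ x, |φ x| ≤ C) :
    HasSum
      (fun n : ℕ =>
        iteratedDeriv n (mittagLeffler α) (-((μ Set.univ).toReal : ℂ)) /
            (Nat.factorial n : ℂ) *
          ∫ x : Fin n → M, Complex.exp (Complex.I * ∑ k, (φ (x k) : ℂ))
            ∂(Measure.pi fun _ : Fin n => μ))
      (mittagLeffler α (∫ x, (Complex.exp (Complex.I * (φ x : ℂ)) - 1) ∂μ)) :=
  fractional_poisson_characteristic_functional_general μ α hα φ hφm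
end
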